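/- For all ν ∈ ℝ with |ν| ≥ 1 and all u₁, u₂ > 0, the chain of inequalities 2·K_ν(u₁)·K_ν(u₂)/(K_ν(u₁) + K_ν(u₂)) ≤ K_ν((u₁ + u₂)/2) ≤ √(K_ν(u₁)·K_ν(u₂)) ≤ K_ν(√(u₁·u₂)) ≤ (K_ν(u₁) + K_ν(u₂))/2 holds; moreover, the second, third and fourth inequalities hold for all ν ∈ ℝ, and in each inequality equality holds if and only if u₁ = u₂. -/

import Mathlib

open Real MeasureTheory Set

/-- The modified Bessel function of the second kind of order `ν`. -/
noncomputable def besselK (ν u : ℝ) : ℝ :=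
  ∫ t in Ioi (0 : ℝ), Real.exp (-u * Real.cosh t) * Real.cosh (ν * t)

namespace BesselKAux

/-- The integrand of `besselK`. -/
noncomputable def f (ν u t : ℝ) : ℝ := Real.exp (-u * Real.cosh t) * Real.cosh (ν * t)

lemma besselK_eq (ν u : ℝ) : besselK ν u = ∫ t in Ioi (0:ℝ), f ν u t := rfl

lemma f_pos (ν u t : ℝ) : 0 < f ν u t := mul_pos (exp_pos _) (cosh_pos _)

lemma f_cont (ν u : ℝ) : Continuous (f ν u) := by
  unfold f; fun_prop

lemma quadratic_le_cosh (t : ℝ) : 1 + t ^ 2 / 2 ≤ Real.cosh t := by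
  have h1 : Real.cosh t = 2 * Real.sinh (t / 2) ^ 2 + 1 := by
    have := Real.cosh_two_mul (t / 2)
    have h2 := Real.cosh_sq (t / 2)
    rw [show 2 * (t / 2) = t by ring] at this
    rw [this, h2]; ring
  have h3 : (t / 2) ^ 2 ≤ Real.sinh (t / 2) ^ 2 := by
    have : |t / 2| ≤ |Real.sinh (t / 2)| := by
      rw [Real.abs_sinh]
      exact Real.self_le_sinh_iff.2 (abs_nonneg _)
    calc (t/2)^2 = |t/2|^2 := (sq_abs _).symm
      _ ≤ |Real.sinh (t/2)|^2 := by
          exact pow_le_pow_left₀ (abs_nonneg _) this 2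
      _ = Real.sinh (t/2)^2 := sq_abs _
  nlinarith

lemma cosh_le_exp_abs (x : ℝ) : Real.cosh x ≤ Real.exp |x| := by
  rw [← Real.cosh_abs, Real.cosh_eq]
  have h1 : Real.exp (-|x|) ≤ Real.exp |x| :=
    Real.exp_le_exp.2 (le_trans (neg_nonpos.2 (abs_nonneg _)) (abs_nonneg _))
  linarith

lemma f_integrableOn {u : ℝ} (hu : 0 < u) (ν : ℝ) : IntegrableOn (f ν u) (Ioi 0) := by
  set C : ℝ := Real.exp (-u + ν ^ 2 / (2 * u)) with hC
  set k : ℝ := |ν| / u with hk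
  have hbint : Integrable (fun t : ℝ => C * Real.exp (-(u / 2) * (t - k) ^ 2)) :=
    ((integrable_exp_neg_mul_sq (by positivity)).comp_sub_right k).const_mul C
  refine Integrable.mono' hbint.integrableOn ((f_cont ν u).aestronglyMeasurable.restrict) ?_
  rw [ae_restrict_iff' measurableSet_Ioi]
  refine Filter.Eventually.of_forall fun t ht => ?_
  have ht0 : (0:ℝ) < t := ht
  have h1 : ‖f ν u t‖ = f ν u t := Real.norm_of_nonneg (f_pos ν u t).le
  rw [h1]
  have h2 : Real.cosh (ν * t) ≤ Real.exp (|ν| * t) := by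
    calc Real.cosh (ν * t) ≤ Real.exp |ν * t| := cosh_le_exp_abs _
      _ = Real.exp (|ν| * t) := by rw [abs_mul, abs_of_pos ht0]
  have h3 : Real.exp (-u * Real.cosh t) ≤ Real.exp (-u * (1 + t ^ 2 / 2)) := by
    apply Real.exp_le_exp.2
    have := quadratic_le_cosh t
    nlinarith
  calc f ν u t ≤ Real.exp (-u * (1 + t ^ 2 / 2)) * Real.exp (|ν| * t) := by
        exact mul_le_mul h3 h2 (Real.cosh_pos _).le (Real.exp_pos _).le
    _ = C * Real.exp (-(u / 2) * (t - k) ^ 2) := by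
        rw [← Real.exp_add, hC, hk, ← Real.exp_add]
        congr 1
        have habs : |ν| ^ 2 = ν ^ 2 := sq_abs ν
        field_simp
        ring_nf
        nlinarith [sq_abs ν]

/-- positivity of integrals of continuous functions over `Ioi 0`. -/
lemma integral_pos_aux {g : ℝ → ℝ} (hc : Continuous g) (hnn : ∀ t ∈ Ioi (0:ℝ), 0 ≤ g t)
    (ht₀ : ∃ t₀ ∈ Ioi (0:ℝ), 0 < g t₀) (hint : IntegrableOn g (Ioi 0)) :
    0 < ∫ t in Ioi (0:ℝ), g t := by
  rw [setIntegral_pos_iff_support_of_nonneg_ae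
    ((ae_restrict_iff' measurableSet_Ioi).2 (Filter.Eventually.of_forall hnn)) hint]
  obtain ⟨t₀, ht₀, hpos⟩ := ht₀
  have hopen : IsOpen (g ⁻¹' Ioi 0 ∩ Ioi 0) := (isOpen_Ioi.preimage hc).inter isOpen_Ioi
  refine lt_of_lt_of_le (hopen.measure_pos volume ⟨t₀, hpos, ht₀⟩) (measure_mono ?_)
  intro x hx
  exact ⟨ne_of_gt hx.1, hx.2⟩

lemma integral_lt_aux {g h : ℝ → ℝ} (hgc : Continuous g) (hhc : Continuous h)
    (hle : ∀ t ∈ Ioi (0:ℝ), g t ≤ h t) (hlt : ∃ t₀ ∈ Ioi (0:ℝ), g t₀ < h t₀)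
    (hgi : IntegrableOn g (Ioi 0)) (hhi : IntegrableOn h (Ioi 0)) :
    (∫ t in Ioi (0:ℝ), g t) < ∫ t in Ioi (0:ℝ), h t := by
  have key : 0 < ∫ t in Ioi (0:ℝ), (h t - g t) := by
    refine integral_pos_aux (hhc.sub hgc) (fun t ht => sub_nonneg.2 (hle t ht)) ?_ (hhi.sub hgi)
    obtain ⟨t₀, ht₀, hp⟩ := hlt
    exact ⟨t₀, ht₀, sub_pos.2 hp⟩
  rw [integral_sub hhi hgi] at key
  linarith

lemma cosh_mul_cosh (a b : ℝ) :
    Real.cosh a * Real.cosh b = (Real.cosh (a + b) + Real.cosh (a - b)) / 2 := by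
  rw [Real.cosh_add, Real.cosh_sub]; ring

lemma sinh_mul_sinh (a b : ℝ) :
    Real.sinh a * Real.sinh b = (Real.cosh (a + b) - Real.cosh (a - b)) / 2 := by
  rw [Real.cosh_add, Real.cosh_sub]; ring

lemma besselK_pos {u : ℝ} (hu : 0 < u) (ν : ℝ) : 0 < besselK ν u := by
  rw [besselK_eq]
  exact integral_pos_aux (f_cont ν u) (fun t _ => (f_pos ν u t).le)
    ⟨1, by norm_num, f_pos ν u 1⟩ (f_integrableOn hu ν)

lemma cosh_mul_f (ν u t : ℝ) :
    Real.cosh t * f ν u t = (f (ν + 1) u t + f (ν - 1) u t) / 2 := by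
  unfold f
  have h : Real.cosh (ν * t) * Real.cosh t
      = (Real.cosh ((ν + 1) * t) + Real.cosh ((ν - 1) * t)) / 2 := by
    rw [cosh_mul_cosh (ν * t) t]
    ring_nf
  nlinarith [Real.exp_pos (-u * Real.cosh t), h]

lemma cosh_mul_f_integrableOn {u : ℝ} (hu : 0 < u) (ν : ℝ) :
    IntegrableOn (fun t => Real.cosh t * f ν u t) (Ioi 0) := by
  have : (fun t => Real.cosh t * f ν u t)
      = fun t => (f (ν + 1) u t + f (ν - 1) u t) / 2 := funext (cosh_mul_f ν u)
  rw [this]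
  exact (((f_integrableOn hu (ν + 1)).add (f_integrableOn hu (ν - 1))).div_const 2)

/-- first moment -/
noncomputable def I1 (ν u : ℝ) : ℝ := ∫ t in Ioi (0:ℝ), Real.cosh t * f ν u t

lemma I1_eq {u : ℝ} (hu : 0 < u) (ν : ℝ) :
    I1 ν u = (besselK (ν + 1) u + besselK (ν - 1) u) / 2 := by
  unfold I1
  rw [besselK_eq, besselK_eq]
  rw [← integral_add (f_integrableOn hu (ν+1)) (f_integrableOn hu (ν-1)), ← integral_div]
  congr 1
  exact funext (cosh_mul_f ν u)

lemma abs_sinh_le_cosh (x : ℝ) : |Real.sinh x| ≤ Real.cosh x := by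
  rw [abs_le]
  constructor
  · have := Real.cosh_add_sinh x
    nlinarith [Real.exp_pos x]
  · have := Real.cosh_sub_sinh x
    nlinarith [Real.exp_pos (-x)]

/-- the sinh-sinh integrand -/
noncomputable def S (μ u t : ℝ) : ℝ := Real.sinh t * Real.sinh (μ * t) * Real.exp (-u * Real.cosh t)

lemma S_integrableOn {u : ℝ} (hu : 0 < u) (μ : ℝ) : IntegrableOn (S μ u) (Ioi 0) := by
  refine Integrable.mono' (cosh_mul_f_integrableOn hu μ)
    ((continuous_sinh.mul (continuous_sinh.comp (continuous_const.mul continuous_id))).mul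
      ((continuous_const.mul continuous_cosh).rexp)).aestronglyMeasurable.restrict ?_
  refine Filter.Eventually.of_forall fun t => ?_
  unfold S
  rw [norm_mul, norm_mul]
  have h1 : ‖Real.sinh t‖ ≤ Real.cosh t := abs_sinh_le_cosh t
  have h2 : ‖Real.sinh (μ * t)‖ ≤ Real.cosh (μ * t) := abs_sinh_le_cosh _
  have h3 : ‖Real.exp (-u * Real.cosh t)‖ = Real.exp (-u * Real.cosh t) :=
    Real.norm_of_nonneg (Real.exp_pos _).le
  rw [h3]
  have : Real.cosh t * f μ u t
      = Real.cosh t * (Real.cosh (μ * t) * Real.exp (-u * Real.cosh t)) := by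
    unfold f; ring
  rw [this]
  have hc := Real.cosh_pos t
  have hc2 := Real.cosh_pos (μ * t)
  have he := Real.exp_pos (-u * Real.cosh t)
  calc ‖Real.sinh t‖ * ‖Real.sinh (μ*t)‖ * Real.exp (-u * Real.cosh t)
      ≤ Real.cosh t * Real.cosh (μ*t) * Real.exp (-u * Real.cosh t) := by
        apply mul_le_mul_of_nonneg_right _ he.le
        exact mul_le_mul h1 h2 (norm_nonneg _) hc.le
    _ = Real.cosh t * (Real.cosh (μ*t) * Real.exp (-u * Real.cosh t)) := by ring

lemma tendsto_f_atTop {u : ℝ} (hu : 0 < u) (μ : ℝ) :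
    Filter.Tendsto (fun t => Real.exp (-u * Real.cosh t) * Real.cosh (μ * t))
      Filter.atTop (nhds 0) := by
  have hbound : ∀ t ∈ Ioi (0:ℝ), Real.exp (-u * Real.cosh t) * Real.cosh (μ * t)
      ≤ Real.exp (-u * (1 + t^2/2) + |μ| * t) := by
    intro t ht
    have ht0 : (0:ℝ) < t := ht
    rw [Real.exp_add]
    have h2 : Real.cosh (μ * t) ≤ Real.exp (|μ| * t) := by
      calc Real.cosh (μ * t) ≤ Real.exp |μ * t| := cosh_le_exp_abs _
        _ = Real.exp (|μ| * t) := by rw [abs_mul, abs_of_pos ht0]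
    have h3 : Real.exp (-u * Real.cosh t) ≤ Real.exp (-u * (1 + t^2/2)) := by
      apply Real.exp_le_exp.2
      have := quadratic_le_cosh t
      nlinarith
    exact mul_le_mul h3 h2 (Real.cosh_pos _).le (Real.exp_pos _).le
  have hexp : Filter.Tendsto (fun t : ℝ => -u * (1 + t^2/2) + |μ| * t)
      Filter.atTop Filter.atBot := by
    set c := |μ| with hc
    have heq : (fun t : ℝ => -u * (1 + t^2/2) + c * t)
        = fun t => -(u/2) * (t - c/u)^2 + (-u + c^2/(2*u)) := by
      funext t; field_simp; ring
    rw [heq]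
    apply Filter.tendsto_atBot_add_const_right
    apply Filter.Tendsto.const_mul_atTop_of_neg (by linarith : -(u/2) < 0)
    have h1 : Filter.Tendsto (fun t : ℝ => t - |μ|/u) Filter.atTop Filter.atTop :=
      Filter.tendsto_atTop_add_const_right _ _ Filter.tendsto_id
    exact (Filter.tendsto_pow_atTop (by norm_num)).comp h1
  have hpos : ∀ t, 0 ≤ Real.exp (-u * Real.cosh t) * Real.cosh (μ * t) :=
    fun t => mul_nonneg (Real.exp_pos _).le (Real.cosh_pos _).le
  have hg : Filter.Tendsto (fun t : ℝ => Real.exp (-u * (1 + t^2/2) + |μ| * t))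
      Filter.atTop (nhds 0) := Real.tendsto_exp_atBot.comp hexp
  refine squeeze_zero' ?_ ?_ hg
  · exact Filter.Eventually.of_forall hpos
  · filter_upwards [Filter.Ioi_mem_atTop 0] with t ht
    exact hbound t ht

/-- the recurrence `K_{μ+1} - K_{μ-1} = (2 μ / u) K_μ`, by integration by parts. -/
lemma besselK_recurrence {u : ℝ} (hu : 0 < u) (μ : ℝ) :
    besselK (μ + 1) u - besselK (μ - 1) u = (2 * μ / u) * besselK μ u := by
  -- step 1 : the integral of S
  have hS : ∫ t in Ioi (0:ℝ), S μ u t = (μ / u) * besselK μ u := by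
    set Φ : ℝ → ℝ := fun t => Real.exp (-u * Real.cosh t) * Real.sinh (μ * t) with hΦ
    set Φ' : ℝ → ℝ := fun t => μ * f μ u t - u * S μ u t with hΦ'
    have hderiv : ∀ t : ℝ, HasDerivAt Φ (Φ' t) t := by
      intro t
      have h1 : HasDerivAt (fun t : ℝ => -u * Real.cosh t) (-u * Real.sinh t) t :=
        (Real.hasDerivAt_cosh t).const_mul (-u)
      have h2 : HasDerivAt (fun t : ℝ => Real.exp (-u * Real.cosh t))
          (-u * Real.sinh t * Real.exp (-u * Real.cosh t)) t := by
        simpa [mul_comm] using h1.exp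
      have h3 : HasDerivAt (fun t : ℝ => Real.sinh (μ * t)) (μ * Real.cosh (μ * t)) t := by
        simpa [mul_comm] using ((hasDerivAt_id t).const_mul μ).sinh
      have h4 := h2.mul h3
      refine h4.congr_deriv ?_
      unfold Φ'
      unfold f S
      ring
    have hterm : Filter.Tendsto Φ Filter.atTop (nhds 0) := by
      have hb := tendsto_f_atTop hu μ
      refine squeeze_zero_norm' ?_ hb
      filter_upwards [] with t
      unfold Φ
      rw [norm_mul]
      have h3 : ‖Real.exp (-u * Real.cosh t)‖ = Real.exp (-u * Real.cosh t) :=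
        Real.norm_of_nonneg (Real.exp_pos _).le
      rw [h3]
      exact mul_le_mul_of_nonneg_left (abs_sinh_le_cosh _) (Real.exp_pos _).le
    have hint : IntegrableOn Φ' (Ioi 0) := by
      unfold Φ'
      exact ((f_integrableOn hu μ).const_mul μ).sub ((S_integrableOn hu μ).const_mul u)
    have hFTC := integral_Ioi_of_hasDerivAt_of_tendsto
      (hderiv 0).continuousAt.continuousWithinAt (fun x (_ : x ∈ Ioi 0) => hderiv x) hint hterm
    have hΦ0 : Φ 0 = 0 := by unfold Φ; simp
    rw [hΦ0, sub_zero] at hFTC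
    -- hFTC : ∫ Φ' = 0
    have hsplit : ∫ t in Ioi (0:ℝ), Φ' t
        = μ * besselK μ u - u * ∫ t in Ioi (0:ℝ), S μ u t := by
      unfold Φ'
      rw [integral_sub ((f_integrableOn hu μ).const_mul μ) ((S_integrableOn hu μ).const_mul u),
        integral_const_mul, integral_const_mul, besselK_eq]
    rw [hsplit] at hFTC
    field_simp
    linarith
  -- step 2 : pointwise identity f (μ+1) - f (μ-1) = 2 * S
  have hpt : ∀ t : ℝ, f (μ + 1) u t - f (μ - 1) u t = 2 * S μ u t := by
    intro t
    unfold f S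
    have : Real.cosh ((μ+1)*t) - Real.cosh ((μ-1)*t) = 2 * (Real.sinh (μ*t) * Real.sinh t) := by
      rw [sinh_mul_sinh (μ*t) t]
      ring_nf
    nlinarith [Real.exp_pos (-u * Real.cosh t), this]
  have : besselK (μ+1) u - besselK (μ-1) u = ∫ t in Ioi (0:ℝ), 2 * S μ u t := by
    rw [besselK_eq, besselK_eq, ← integral_sub (f_integrableOn hu (μ+1)) (f_integrableOn hu (μ-1))]
    congr 1
    exact funext hpt
  rw [this, integral_const_mul, hS]
  ring

lemma sqrt_mul_le_add_div_two {a b : ℝ} (ha : 0 ≤ a) (hb : 0 ≤ b) :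
    Real.sqrt (a * b) ≤ (a + b) / 2 := by
  have h := Real.sqrt_le_sqrt (by nlinarith [sq_nonneg (a - b)] : a * b ≤ ((a + b)/2)^2)
  rwa [Real.sqrt_sq (by positivity)] at h

lemma lt_sqrt_of_sq_lt {a b : ℝ} (ha : 0 ≤ a) (h : a ^ 2 < b) : a < Real.sqrt b := by
  have := Real.sqrt_lt_sqrt (sq_nonneg a) h
  rwa [Real.sqrt_sq ha] at this

/-- Cauchy-Schwarz on `Ioi 0`, non-strict. -/
lemma cs_le {p q : ℝ → ℝ}
    (hp2 : IntegrableOn (fun t => p t ^ 2) (Ioi 0)) (hq2 : IntegrableOn (fun t => q t ^ 2) (Ioi 0))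
    (hpq : IntegrableOn (fun t => p t * q t) (Ioi 0))
    (hq2pos : 0 < ∫ t in Ioi (0:ℝ), q t ^ 2) :
    (∫ t in Ioi (0:ℝ), p t * q t) ^ 2
      ≤ (∫ t in Ioi (0:ℝ), p t ^ 2) * ∫ t in Ioi (0:ℝ), q t ^ 2 := by
  set A := ∫ t in Ioi (0:ℝ), p t ^ 2
  set B := ∫ t in Ioi (0:ℝ), p t * q t
  set C := ∫ t in Ioi (0:ℝ), q t ^ 2
  set l := B / C with hl
  have hexp : ∀ t, (p t - l * q t) ^ 2 = p t ^ 2 - (2 * l) * (p t * q t) + l ^ 2 * q t ^ 2 := by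
    intro t; ring
  have i2 : IntegrableOn (fun t => 2 * l * (p t * q t)) (Ioi 0) := hpq.const_mul _
  have i3 : IntegrableOn (fun t => l ^ 2 * q t ^ 2) (Ioi 0) := hq2.const_mul _
  have i1 : IntegrableOn (fun t => p t ^ 2 - 2 * l * (p t * q t)) (Ioi 0) := hp2.sub i2
  have hint : ∫ t in Ioi (0:ℝ), (p t - l * q t) ^ 2 = A - (2 * l) * B + l ^ 2 * C := by
    rw [show (fun t => (p t - l * q t) ^ 2)
        = fun t => (p t ^ 2 - 2 * l * (p t * q t)) + l ^ 2 * q t ^ 2 from funext (by intro t; ring)]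
    rw [integral_add i1 i3, integral_sub hp2 i2, integral_const_mul, integral_const_mul]
  have hnn : 0 ≤ ∫ t in Ioi (0:ℝ), (p t - l * q t) ^ 2 :=
    setIntegral_nonneg measurableSet_Ioi fun t _ => sq_nonneg _
  rw [hint, hl] at hnn
  have hC : C ≠ 0 := ne_of_gt hq2pos
  have : 0 ≤ A - B ^ 2 / C := by
    have : A - 2 * (B / C) * B + (B / C) ^ 2 * C = A - B ^ 2 / C := by field_simp; ring
    linarith [this ▸ hnn]
  calc B ^ 2 = B ^ 2 / C * C := by field_simp
    _ ≤ A * C := mul_le_mul_of_nonneg_right (by linarith) hq2pos.le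

/-- Cauchy-Schwarz on `Ioi 0`, strict, given non-proportionality. -/
lemma cs_lt {p q : ℝ → ℝ} (hpc : Continuous p) (hqc : Continuous q)
    (hp2 : IntegrableOn (fun t => p t ^ 2) (Ioi 0)) (hq2 : IntegrableOn (fun t => q t ^ 2) (Ioi 0))
    (hpq : IntegrableOn (fun t => p t * q t) (Ioi 0))
    (hq2pos : 0 < ∫ t in Ioi (0:ℝ), q t ^ 2)
    (hcross : ∃ t₁ ∈ Ioi (0:ℝ), ∃ t₂ ∈ Ioi (0:ℝ), p t₁ * q t₂ ≠ p t₂ * q t₁) :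
    (∫ t in Ioi (0:ℝ), p t * q t) ^ 2
      < (∫ t in Ioi (0:ℝ), p t ^ 2) * ∫ t in Ioi (0:ℝ), q t ^ 2 := by
  set A := ∫ t in Ioi (0:ℝ), p t ^ 2 with hA
  set B := ∫ t in Ioi (0:ℝ), p t * q t with hB
  set C := ∫ t in Ioi (0:ℝ), q t ^ 2 with hCdef
  set l := B / C with hl
  have hexp : ∀ t, (p t - l * q t) ^ 2 = p t ^ 2 - (2 * l) * (p t * q t) + l ^ 2 * q t ^ 2 := by
    intro t; ring
  have i2 : IntegrableOn (fun t => 2 * l * (p t * q t)) (Ioi 0) := hpq.const_mul _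
  have i3 : IntegrableOn (fun t => l ^ 2 * q t ^ 2) (Ioi 0) := hq2.const_mul _
  have i1 : IntegrableOn (fun t => p t ^ 2 - 2 * l * (p t * q t)) (Ioi 0) := hp2.sub i2
  have hint : ∫ t in Ioi (0:ℝ), (p t - l * q t) ^ 2 = A - (2 * l) * B + l ^ 2 * C := by
    rw [show (fun t => (p t - l * q t) ^ 2)
        = fun t => (p t ^ 2 - 2 * l * (p t * q t)) + l ^ 2 * q t ^ 2 from funext (by intro t; ring)]
    rw [integral_add i1 i3, integral_sub hp2 i2, integral_const_mul, integral_const_mul]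
  -- find a point where p - l q ≠ 0
  have hne : ∃ t₀ ∈ Ioi (0:ℝ), p t₀ - l * q t₀ ≠ 0 := by
    by_contra hcon
    push_neg at hcon
    obtain ⟨t₁, ht₁, t₂, ht₂, hcr⟩ := hcross
    have e1 : p t₁ = l * q t₁ := by have := hcon t₁ ht₁; linarith
    have e2 : p t₂ = l * q t₂ := by have := hcon t₂ ht₂; linarith
    apply hcr
    rw [e1, e2]; ring
  have hpos : 0 < ∫ t in Ioi (0:ℝ), (p t - l * q t) ^ 2 := by
    obtain ⟨t₀, ht₀, hne0⟩ := hne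
    refine integral_pos_aux (by fun_prop) (fun t _ => sq_nonneg _)
      ⟨t₀, ht₀, by positivity⟩ ?_
    rw [show (fun t => (p t - l * q t) ^ 2)
        = fun t => (p t ^ 2 - 2 * l * (p t * q t)) + l ^ 2 * q t ^ 2 from funext (by intro t; ring)]
    exact i1.add i3
  rw [hint, hl] at hpos
  have hC : C ≠ 0 := ne_of_gt hq2pos
  have h2 : 0 < A - B ^ 2 / C := by
    have : A - 2 * (B / C) * B + (B / C) ^ 2 * C = A - B ^ 2 / C := by field_simp; ring
    linarith [this ▸ hpos]
  calc B ^ 2 = B ^ 2 / C * C := by field_simp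
    _ < A * C := mul_lt_mul_of_pos_right (by linarith) hq2pos

/-- strict Turán type inequality. -/
lemma turan {u : ℝ} (hu : 0 < u) (ν : ℝ) :
    besselK ν u ^ 2 < besselK (ν + 1) u * besselK (ν - 1) u := by
  set p : ℝ → ℝ := fun t => Real.sqrt (f (ν + 1) u t) with hp
  set q : ℝ → ℝ := fun t => Real.sqrt (f (ν - 1) u t) with hq
  have hp2 : ∀ t, p t ^ 2 = f (ν + 1) u t := fun t => Real.sq_sqrt (f_pos _ _ _).le
  have hq2 : ∀ t, q t ^ 2 = f (ν - 1) u t := fun t => Real.sq_sqrt (f_pos _ _ _).le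
  have hpq : ∀ t, p t * q t = Real.sqrt (f (ν + 1) u t * f (ν - 1) u t) := fun t =>
    (Real.sqrt_mul (f_pos _ _ _).le _).symm
  have hprod : ∀ t : ℝ, t ≠ 0 → f ν u t ^ 2 < f (ν + 1) u t * f (ν - 1) u t := by
    intro t ht
    unfold f
    have h1 := cosh_mul_cosh ((ν+1)*t) ((ν-1)*t)
    rw [show (ν+1)*t + (ν-1)*t = 2*(ν*t) by ring, show (ν+1)*t - (ν-1)*t = 2*t by ring] at h1
    have h2 : Real.cosh (ν*t) ^ 2 = (Real.cosh (2*(ν*t)) + 1) / 2 := by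
      have h := cosh_mul_cosh (ν*t) (ν*t)
      rw [sub_self, Real.cosh_zero, show ν*t + ν*t = 2*(ν*t) by ring] at h
      rw [sq, h]
    have h3 : (1:ℝ) < Real.cosh (2*t) := Real.one_lt_cosh.2 (by simpa using ht)
    calc (Real.exp (-u * Real.cosh t) * Real.cosh (ν*t)) ^ 2
        = Real.exp (-u * Real.cosh t) ^ 2 * ((Real.cosh (2*(ν*t)) + 1)/2) := by rw [← h2]; ring
      _ < Real.exp (-u * Real.cosh t) ^ 2 * ((Real.cosh (2*(ν*t)) + Real.cosh (2*t))/2) := by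
          apply mul_lt_mul_of_pos_left _ (by positivity)
          linarith
      _ = Real.exp (-u * Real.cosh t) * Real.cosh ((ν+1)*t)
          * (Real.exp (-u * Real.cosh t) * Real.cosh ((ν-1)*t)) := by rw [← h1]; ring
  -- step 1 : K_ν < ∫ p q
  have hpqi : IntegrableOn (fun t => p t * q t) (Ioi 0) := by
    refine Integrable.mono' (((f_integrableOn hu (ν+1)).add (f_integrableOn hu (ν-1))).div_const 2)
      ((((f_cont (ν+1) u).sqrt).mul ((f_cont (ν-1) u).sqrt)).aestronglyMeasurable.restrict) ?_
    refine Filter.Eventually.of_forall fun t => ?_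
    rw [Real.norm_of_nonneg (by positivity), hpq t]
    exact sqrt_mul_le_add_div_two (f_pos _ _ _).le (f_pos _ _ _).le
  have hstep1 : besselK ν u < ∫ t in Ioi (0:ℝ), p t * q t := by
    rw [besselK_eq]
    refine integral_lt_aux (f_cont ν u) (((f_cont (ν+1) u).sqrt).mul ((f_cont (ν-1) u).sqrt))
      (fun t ht => ?_) ⟨1, by norm_num, ?_⟩ (f_integrableOn hu ν) hpqi
    · rw [hpq t]
      exact le_of_lt (lt_sqrt_of_sq_lt (f_pos ν u t).le (hprod t (ne_of_gt ht)))
    · rw [hpq 1]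
      exact lt_sqrt_of_sq_lt (f_pos ν u 1).le (hprod 1 one_ne_zero)
  have hcs : (∫ t in Ioi (0:ℝ), p t * q t) ^ 2
      ≤ (∫ t in Ioi (0:ℝ), p t ^ 2) * ∫ t in Ioi (0:ℝ), q t ^ 2 := by
    refine cs_le ?_ ?_ hpqi ?_
    · rw [show (fun t => p t ^ 2) = f (ν+1) u from funext hp2]; exact f_integrableOn hu _
    · rw [show (fun t => q t ^ 2) = f (ν-1) u from funext hq2]; exact f_integrableOn hu _
    · rw [show (fun t => q t ^ 2) = f (ν-1) u from funext hq2, ← besselK_eq]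
      exact besselK_pos hu _
  have hA : (∫ t in Ioi (0:ℝ), p t ^ 2) = besselK (ν+1) u := by
    rw [show (fun t => p t ^ 2) = f (ν+1) u from funext hp2, ← besselK_eq]
  have hB : (∫ t in Ioi (0:ℝ), q t ^ 2) = besselK (ν-1) u := by
    rw [show (fun t => q t ^ 2) = f (ν-1) u from funext hq2, ← besselK_eq]
  rw [hA, hB] at hcs
  have hKnn : 0 ≤ besselK ν u := (besselK_pos hu ν).le
  nlinarith [hstep1, hcs, besselK_pos hu ν]

lemma hasDerivAt_besselK {u : ℝ} (hu : 0 < u) (ν : ℝ) :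
    HasDerivAt (besselK ν) (-I1 ν u) u := by
  have key := hasDerivAt_integral_of_dominated_loc_of_deriv_le
    (μ := volume.restrict (Ioi (0:ℝ))) (x₀ := u)
    (F := fun x t => f ν x t) (F' := fun x t => -(Real.cosh t * f ν x t))
    (bound := fun t => Real.cosh t * f ν (u/2) t)
    (Metric.ball_mem_nhds u (half_pos hu))
    (Filter.Eventually.of_forall fun x => (f_cont ν x).aestronglyMeasurable.restrict)
    (f_integrableOn hu ν)
    (((continuous_cosh.mul (f_cont ν u)).neg).aestronglyMeasurable.restrict)
    ?_ (cosh_mul_f_integrableOn (half_pos hu) ν) ?_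
  · have : besselK ν = fun x => ∫ t in Ioi (0:ℝ), f ν x t := funext fun x => besselK_eq ν x
    rw [this]
    refine key.2.congr_deriv ?_
    unfold I1
    rw [← integral_neg]
  · refine Filter.Eventually.of_forall fun t => fun x hx => ?_
    have hx2 : u / 2 ≤ x := by
      have := abs_lt.1 (mem_ball_iff_norm.1 hx)
      linarith [this.1]
    rw [norm_neg, Real.norm_of_nonneg (mul_nonneg (Real.cosh_pos t).le (f_pos ν x t).le)]
    apply mul_le_mul_of_nonneg_left _ (Real.cosh_pos t).le
    unfold f
    apply mul_le_mul_of_nonneg_right _ (Real.cosh_pos _).le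
    apply Real.exp_le_exp.2
    have := Real.cosh_pos t
    nlinarith
  · refine Filter.Eventually.of_forall fun t => fun x _ => ?_
    have h1 : HasDerivAt (fun x : ℝ => -x * Real.cosh t) (-Real.cosh t) x := by
      simpa using (hasDerivAt_id x).neg.mul_const (Real.cosh t)
    have h2 : HasDerivAt (fun x : ℝ => Real.exp (-x * Real.cosh t))
        (-Real.cosh t * Real.exp (-x * Real.cosh t)) x := by
      simpa [mul_comm] using h1.exp
    have h3 := h2.mul_const (Real.cosh (ν * t))
    refine h3.congr_deriv ?_
    unfold f
    ring

/-- derivative of `besselK ν` -/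
noncomputable def D (ν u : ℝ) : ℝ := -((besselK (ν + 1) u + besselK (ν - 1) u) / 2)

/-- second derivative of `besselK ν` -/
noncomputable def I2v (ν u : ℝ) : ℝ :=
  (besselK (ν + 2) u + 2 * besselK ν u + besselK (ν - 2) u) / 4

lemma hasDerivAt_besselK' {u : ℝ} (hu : 0 < u) (ν : ℝ) :
    HasDerivAt (besselK ν) (D ν u) u := by
  have := hasDerivAt_besselK hu ν
  rwa [I1_eq hu, show -((besselK (ν+1) u + besselK (ν-1) u)/2) = D ν u from rfl] at this

lemma hasDerivAt_D {u : ℝ} (hu : 0 < u) (ν : ℝ) :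
    HasDerivAt (D ν) (I2v ν u) u := by
  have hA := hasDerivAt_besselK' hu (ν + 1)
  have hB := hasDerivAt_besselK' hu (ν - 1)
  have h := ((hA.add hB).div_const 2).neg
  refine h.congr_deriv ?_
  unfold D I2v
  rw [show ν + 1 + 1 = ν + 2 by ring, show ν + 1 - 1 = ν by ring,
    show ν - 1 + 1 = ν by ring, show ν - 1 - 1 = ν - 2 by ring]
  ring

lemma rec_mul {u : ℝ} (hu : 0 < u) (μ : ℝ) :
    u * (besselK (μ + 1) u - besselK (μ - 1) u) = 2 * μ * besselK μ u := by
  rw [besselK_recurrence hu μ]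
  field_simp

/-- the Bessel ODE identity -/
lemma ode_identity {u : ℝ} (hu : 0 < u) (ν : ℝ) :
    I2v ν u * u ^ 2 + D ν u * u = (u ^ 2 + ν ^ 2) * besselK ν u := by
  have r1 := rec_mul hu ν
  have r2 := rec_mul hu (ν + 1)
  have r3 := rec_mul hu (ν - 1)
  rw [show ν + 1 + 1 = ν + 2 by ring, show ν + 1 - 1 = ν by ring] at r2
  rw [show ν - 1 + 1 = ν by ring, show ν - 1 - 1 = ν - 2 by ring] at r3
  unfold D I2v
  linear_combination (u/4) * r2 - (u/4) * r3 + (ν/2) * r1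

/-- Part 4 : `x ↦ K_ν (exp x)` is strictly convex on `ℝ`. -/
lemma strictConvexOn_besselK_exp (ν : ℝ) :
    StrictConvexOn ℝ univ (fun x : ℝ => besselK ν (Real.exp x)) := by
  set φ : ℝ → ℝ := fun x => besselK ν (Real.exp x) with hφ
  have hφd : ∀ x : ℝ, HasDerivAt φ (D ν (Real.exp x) * Real.exp x) x := fun x =>
    (hasDerivAt_besselK' (Real.exp_pos x) ν).comp x (Real.hasDerivAt_exp x)
  have hd1 : deriv φ = fun x => D ν (Real.exp x) * Real.exp x := funext fun x => (hφd x).deriv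
  have hφd2 : ∀ x : ℝ, HasDerivAt (fun x => D ν (Real.exp x) * Real.exp x)
      (I2v ν (Real.exp x) * Real.exp x * Real.exp x + D ν (Real.exp x) * Real.exp x) x := fun x =>
    (((hasDerivAt_D (Real.exp_pos x) ν).comp x (Real.hasDerivAt_exp x)).mul
      (Real.hasDerivAt_exp x))
  apply strictConvexOn_univ_of_deriv2_pos
  · exact continuous_iff_continuousAt.2 fun x => (hφd x).continuousAt
  · intro x
    simp only [Function.iterate_succ, Function.iterate_zero, Function.id_comp,
      Function.comp_apply]
    rw [hd1, (hφd2 x).deriv]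
    have key := ode_identity (Real.exp_pos x) ν
    have hK := besselK_pos (Real.exp_pos x) ν
    have he := Real.exp_pos x
    have heq : I2v ν (Real.exp x) * Real.exp x * Real.exp x + D ν (Real.exp x) * Real.exp x
        = (Real.exp x ^ 2 + ν ^ 2) * besselK ν (Real.exp x) := by rw [← key]; ring
    rw [heq]
    have h5 : 0 < Real.exp x ^ 2 + ν ^ 2 := by nlinarith [sq_nonneg ν, pow_pos he 2]
    exact mul_pos h5 hK

/-- Part 3 : `x ↦ log (K_ν (exp x))` is strictly concave on `ℝ`. -/
lemma strictConcaveOn_log_besselK_exp (ν : ℝ) :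
    StrictConcaveOn ℝ univ (fun x : ℝ => Real.log (besselK ν (Real.exp x))) := by
  set ψ : ℝ → ℝ := fun x => Real.log (besselK ν (Real.exp x)) with hψ
  have hφd : ∀ x : ℝ, HasDerivAt (fun x : ℝ => besselK ν (Real.exp x))
      (D ν (Real.exp x) * Real.exp x) x := fun x =>
    (hasDerivAt_besselK' (Real.exp_pos x) ν).comp x (Real.hasDerivAt_exp x)
  have hψd : ∀ x : ℝ, HasDerivAt ψ
      ((D ν (Real.exp x) * Real.exp x) / besselK ν (Real.exp x)) x := fun x =>
    (hφd x).log (ne_of_gt (besselK_pos (Real.exp_pos x) ν))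
  have hd1 : deriv ψ = fun x => (D ν (Real.exp x) * Real.exp x) / besselK ν (Real.exp x) :=
    funext fun x => (hψd x).deriv
  have hψd2 : ∀ x : ℝ, HasDerivAt
      (fun x => (D ν (Real.exp x) * Real.exp x) / besselK ν (Real.exp x))
      (((I2v ν (Real.exp x) * Real.exp x * Real.exp x + D ν (Real.exp x) * Real.exp x)
          * besselK ν (Real.exp x)
        - (D ν (Real.exp x) * Real.exp x) * (D ν (Real.exp x) * Real.exp x))
        / (besselK ν (Real.exp x)) ^ 2) x := by
    intro x
    have hnum : HasDerivAt (fun x => D ν (Real.exp x) * Real.exp x)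
        (I2v ν (Real.exp x) * Real.exp x * Real.exp x + D ν (Real.exp x) * Real.exp x) x :=
      (((hasDerivAt_D (Real.exp_pos x) ν).comp x (Real.hasDerivAt_exp x)).mul
        (Real.hasDerivAt_exp x))
    exact hnum.div (hφd x) (ne_of_gt (besselK_pos (Real.exp_pos x) ν))
  apply strictConcaveOn_univ_of_deriv2_neg
  · exact continuous_iff_continuousAt.2 fun x => (hψd x).continuousAt
  · intro x
    simp only [Function.iterate_succ, Function.iterate_zero, Function.id_comp,
      Function.comp_apply]
    rw [hd1, (hψd2 x).deriv]
    set y := Real.exp x with hy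
    have hy0 : 0 < y := Real.exp_pos x
    have key := ode_identity hy0 ν
    have hK := besselK_pos hy0 ν
    have ht := turan hy0 ν
    have r1 := rec_mul hy0 ν
    -- numerator = (y²+ν²)K² - y² ((A+B)/2)² = y² (K² - A B) < 0
    apply div_neg_of_neg_of_pos _ (by positivity)
    have hDdef : D ν y = -((besselK (ν + 1) y + besselK (ν - 1) y) / 2) := rfl
    rw [hDdef] at key ⊢
    have hnum : (I2v ν y * y * y + -((besselK (ν + 1) y + besselK (ν - 1) y) / 2) * y)
          * besselK ν y
        - (-((besselK (ν + 1) y + besselK (ν - 1) y) / 2) * y)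
          * (-((besselK (ν + 1) y + besselK (ν - 1) y) / 2) * y)
        = y ^ 2 * (besselK ν y ^ 2 - besselK (ν + 1) y * besselK (ν - 1) y) := by
      linear_combination (besselK ν y) * key
        - ((y * (besselK (ν + 1) y - besselK (ν - 1) y) + 2 * ν * besselK ν y)/4) * r1
    rw [hnum]
    have hlt : besselK ν y ^ 2 - besselK (ν + 1) y * besselK (ν - 1) y < 0 := by linarith
    exact mul_neg_of_pos_of_neg (pow_pos hy0 2) hlt

/-- Part 1 : `u ↦ 1 / K_ν u` is strictly convex on `(0,∞)` when `ν² ≥ 1`. -/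
lemma strictConvexOn_inv_besselK {ν : ℝ} (hν : 1 ≤ ν ^ 2) :
    StrictConvexOn ℝ (Ioi 0) (fun u : ℝ => (besselK ν u)⁻¹) := by
  set χ : ℝ → ℝ := fun u => (besselK ν u)⁻¹ with hχ
  have hχd : ∀ u : ℝ, 0 < u → HasDerivAt χ (-(D ν u) / (besselK ν u) ^ 2) u := fun u hu =>
    (hasDerivAt_besselK' hu ν).inv (ne_of_gt (besselK_pos hu ν))
  apply strictConvexOn_of_deriv2_pos (convex_Ioi 0)
  · exact fun u hu => ((hχd u hu).continuousAt).continuousWithinAt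
  · intro x hx
    rw [interior_Ioi] at hx
    have hx0 : (0:ℝ) < x := hx
    simp only [Function.iterate_succ, Function.iterate_zero, Function.id_comp,
      Function.comp_apply]
    have hev : deriv χ =ᶠ[nhds x] fun u => -(D ν u) / (besselK ν u) ^ 2 := by
      filter_upwards [isOpen_Ioi.mem_nhds hx] with y hy
      exact (hχd y hy).deriv
    rw [hev.deriv_eq]
    have hKd : HasDerivAt (fun u => (besselK ν u) ^ 2)
        (2 * besselK ν x ^ 1 * D ν x) x := (hasDerivAt_besselK' hx0 ν).pow 2
    have hg : HasDerivAt (fun u => -(D ν u) / (besselK ν u) ^ 2)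
        ((-(I2v ν x) * (besselK ν x) ^ 2 - -(D ν x) * (2 * besselK ν x ^ 1 * D ν x))
          / ((besselK ν x) ^ 2) ^ 2) x :=
      ((hasDerivAt_D hx0 ν).neg).div hKd (pow_ne_zero 2 (ne_of_gt (besselK_pos hx0 ν)))
    rw [hg.deriv]
    -- now pure algebra
    set K := besselK ν x with hK
    set A := besselK (ν + 1) x with hA
    set B := besselK (ν - 1) x with hB
    have hKpos : 0 < K := besselK_pos hx0 ν
    have hApos : 0 < A := besselK_pos hx0 (ν + 1)
    have hBpos : 0 < B := besselK_pos hx0 (ν - 1)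
    have key := ode_identity hx0 ν
    have r1 := rec_mul hx0 ν
    have ht := turan hx0 ν
    apply div_pos _ (by positivity)
    have hDdef : D ν x = -((A + B) / 2) := rfl
    rw [hDdef] at key
    set s : ℝ := x * ((A + B) / 2) with hs_def
    have hspos : 0 < s := by positivity
    have hs : s ^ 2 = ν ^ 2 * K ^ 2 + x ^ 2 * (A * B) := by
      rw [hs_def]
      linear_combination ((x * (A - B) + 2 * ν * K) / 4) * r1
    have h1 : (ν ^ 2 + x ^ 2) * K ^ 2 < s ^ 2 := by nlinarith [ht, pow_pos hx0 2]
    have h2 : K ^ 2 < s ^ 2 := by nlinarith [pow_pos hx0 2, pow_pos hKpos 2]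
    have h3 : K < s := by nlinarith
    have hgoal : 0 < 2 * s ^ 2 - s * K - (x ^ 2 + ν ^ 2) * K ^ 2 := by
      nlinarith [mul_lt_mul_of_pos_left h3 hspos]
    -- numerator = (2 D² - I2v K) K², and  x² (2 D² - I2v K) = 2 s² - s K - (x²+ν²) K²
    have hkey2 : x ^ 2 * (-(I2v ν x) * K ^ 2 - -(D ν x) * (2 * K ^ 1 * D ν x))
        = (2 * s ^ 2 - s * K - (x ^ 2 + ν ^ 2) * K ^ 2) * K := by
      rw [hDdef, hs_def]
      linear_combination (-(K^2)) * key
    have hx2 : 0 < x ^ 2 := pow_pos hx0 2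
    have hxN : 0 < x ^ 2 * (-(I2v ν x) * K ^ 2 - -(D ν x) * (2 * K ^ 1 * D ν x)) := by
      rw [hkey2]
      exact mul_pos hgoal hKpos
    have hNeq : -(I2v ν x) * K ^ 2 - -(D ν x) * (2 * K ^ 1 * D ν x)
        = x ^ 2 * (-(I2v ν x) * K ^ 2 - -(D ν x) * (2 * K ^ 1 * D ν x)) / x ^ 2 := by
      field_simp
    rw [hNeq]
    exact div_pos hxN hx2

/-- strict log-convexity at the midpoint. -/
lemma besselK_sq_midpoint_lt {ν u₁ u₂ : ℝ} (h₁ : 0 < u₁) (h₂ : 0 < u₂) (hne : u₁ ≠ u₂) :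
    besselK ν ((u₁ + u₂) / 2) ^ 2 < besselK ν u₁ * besselK ν u₂ := by
  have hm : 0 < (u₁ + u₂) / 2 := by linarith
  set p : ℝ → ℝ := fun t => Real.sqrt (f ν u₁ t) with hpdef
  set q : ℝ → ℝ := fun t => Real.sqrt (f ν u₂ t) with hqdef
  have hp2 : ∀ t, p t ^ 2 = f ν u₁ t := fun t => Real.sq_sqrt (f_pos _ _ _).le
  have hq2 : ∀ t, q t ^ 2 = f ν u₂ t := fun t => Real.sq_sqrt (f_pos _ _ _).le
  have hprod : ∀ t, f ν u₁ t * f ν u₂ t = f ν ((u₁ + u₂) / 2) t ^ 2 := by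
    intro t
    unfold f
    have e1 : Real.exp (-u₁ * Real.cosh t) * Real.exp (-u₂ * Real.cosh t)
        = Real.exp (-((u₁ + u₂) / 2) * Real.cosh t) ^ 2 := by
      rw [← Real.exp_add, sq, ← Real.exp_add]
      congr 1
      ring
    calc Real.exp (-u₁ * Real.cosh t) * Real.cosh (ν * t)
          * (Real.exp (-u₂ * Real.cosh t) * Real.cosh (ν * t))
        = Real.exp (-u₁ * Real.cosh t) * Real.exp (-u₂ * Real.cosh t) * Real.cosh (ν * t) ^ 2 := by
          ring
      _ = (Real.exp (-((u₁ + u₂) / 2) * Real.cosh t) * Real.cosh (ν * t)) ^ 2 := by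
          rw [e1]; ring
  have hpq : ∀ t, p t * q t = f ν ((u₁ + u₂) / 2) t := by
    intro t
    rw [hpdef, hqdef]
    simp only
    rw [← Real.sqrt_mul (f_pos ν u₁ t).le, hprod t, Real.sqrt_sq (f_pos _ _ _).le]
  have key := cs_lt (p := p) (q := q)
    ((f_cont ν u₁).sqrt) ((f_cont ν u₂).sqrt)
    (by rw [show (fun t => p t ^ 2) = f ν u₁ from funext hp2]; exact f_integrableOn h₁ ν)
    (by rw [show (fun t => q t ^ 2) = f ν u₂ from funext hq2]; exact f_integrableOn h₂ ν)
    (by rw [show (fun t => p t * q t) = f ν ((u₁+u₂)/2) from funext hpq]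
        exact f_integrableOn hm ν)
    (by rw [show (fun t => q t ^ 2) = f ν u₂ from funext hq2, ← besselK_eq]
        exact besselK_pos h₂ ν)
    ?_
  · rw [show (fun t => p t * q t) = f ν ((u₁+u₂)/2) from funext hpq,
      show (fun t => p t ^ 2) = f ν u₁ from funext hp2,
      show (fun t => q t ^ 2) = f ν u₂ from funext hq2,
      ← besselK_eq, ← besselK_eq, ← besselK_eq] at key
    exact key
  · refine ⟨1, by norm_num, 2, by norm_num, fun hcontra => ?_⟩
    have hsq : p 1 ^ 2 * q 2 ^ 2 = p 2 ^ 2 * q 1 ^ 2 := by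
      have := congrArg (fun z => z ^ 2) hcontra
      simp only [mul_pow] at this
      linarith
    rw [hp2, hp2, hq2, hq2] at hsq
    unfold f at hsq
    have hw1 : 0 < Real.cosh (ν * 1) := Real.cosh_pos _
    have hw2 : 0 < Real.cosh (ν * 2) := Real.cosh_pos _
    have hexp : Real.exp (-u₁ * Real.cosh 1) * Real.exp (-u₂ * Real.cosh 2)
        = Real.exp (-u₁ * Real.cosh 2) * Real.exp (-u₂ * Real.cosh 1) := by
      have h' : (Real.exp (-u₁ * Real.cosh 1) * Real.exp (-u₂ * Real.cosh 2))
            * (Real.cosh (ν * 1) * Real.cosh (ν * 2))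
          = (Real.exp (-u₁ * Real.cosh 2) * Real.exp (-u₂ * Real.cosh 1))
            * (Real.cosh (ν * 1) * Real.cosh (ν * 2)) := by
        nlinarith [hsq]
      exact mul_right_cancel₀ (ne_of_gt (mul_pos hw1 hw2)) h'
    rw [← Real.exp_add, ← Real.exp_add] at hexp
    have hlin := Real.exp_injective hexp
    have hcosh : Real.cosh 1 < Real.cosh 2 := by
      rw [Real.cosh_lt_cosh]
      rw [abs_of_pos (by norm_num : (0:ℝ) < 1), abs_of_pos (by norm_num : (0:ℝ) < 2)]
      norm_num
    apply hne
    have : (u₁ - u₂) * (Real.cosh 2 - Real.cosh 1) = 0 := by linarith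
    rcases mul_eq_zero.1 this with h | h
    · linarith
    · linarith

end BesselKAux

open BesselKAux

theorem besselK_mean_inequality_chain (ν u₁ u₂ : ℝ) (h₁ : 0 < u₁) (h₂ : 0 < u₂) :
    (1 ≤ |ν| →
      2 * besselK ν u₁ * besselK ν u₂ / (besselK ν u₁ + besselK ν u₂) ≤
        besselK ν ((u₁ + u₂) / 2) ∧
      (2 * besselK ν u₁ * besselK ν u₂ / (besselK ν u₁ + besselK ν u₂) =
        besselK ν ((u₁ + u₂) / 2) ↔ u₁ = u₂)) ∧
    (besselK ν ((u₁ + u₂) / 2) ≤ Real.sqrt (besselK ν u₁ * besselK ν u₂) ∧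
      (besselK ν ((u₁ + u₂) / 2) = Real.sqrt (besselK ν u₁ * besselK ν u₂) ↔ u₁ = u₂)) ∧
    (Real.sqrt (besselK ν u₁ * besselK ν u₂) ≤ besselK ν (Real.sqrt (u₁ * u₂)) ∧
      (Real.sqrt (besselK ν u₁ * besselK ν u₂) = besselK ν (Real.sqrt (u₁ * u₂)) ↔ u₁ = u₂)) ∧
    (besselK ν (Real.sqrt (u₁ * u₂)) ≤ (besselK ν u₁ + besselK ν u₂) / 2 ∧
      (besselK ν (Real.sqrt (u₁ * u₂)) = (besselK ν u₁ + besselK ν u₂) / 2 ↔ u₁ = u₂)) := by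
  have hK1 := besselK_pos h₁ ν
  have hK2 := besselK_pos h₂ ν
  have hm : 0 < (u₁ + u₂) / 2 := by linarith
  have hKm := besselK_pos hm ν
  have hg0 : 0 < Real.sqrt (u₁ * u₂) := Real.sqrt_pos.2 (mul_pos h₁ h₂)
  have hKg := besselK_pos hg0 ν
  have hxne : u₁ ≠ u₂ → Real.log u₁ ≠ Real.log u₂ := by
    intro hne h
    exact hne (by rw [← Real.exp_log h₁, h, Real.exp_log h₂])
  have hgexp : Real.exp ((1/2) * Real.log u₁ + (1/2) * Real.log u₂) = Real.sqrt (u₁ * u₂) := by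
    have hs : Real.sqrt (u₁ * u₂) = Real.exp (Real.log (u₁ * u₂) / 2) := by
      rw [← Real.log_sqrt (mul_pos h₁ h₂).le,
        Real.exp_log (Real.sqrt_pos.2 (mul_pos h₁ h₂))]
    rw [hs, Real.log_mul h₁.ne' h₂.ne']
    congr 1
    ring
  have S2 : u₁ ≠ u₂ →
      besselK ν ((u₁ + u₂) / 2) < Real.sqrt (besselK ν u₁ * besselK ν u₂) := fun hne =>
    lt_sqrt_of_sq_lt hKm.le (besselK_sq_midpoint_lt h₁ h₂ hne)
  have S4 : u₁ ≠ u₂ →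
      besselK ν (Real.sqrt (u₁ * u₂)) < (besselK ν u₁ + besselK ν u₂) / 2 := by
    intro hne
    have h := (strictConvexOn_besselK_exp ν).2 (mem_univ (Real.log u₁))
      (mem_univ (Real.log u₂)) (hxne hne)
      (by norm_num : (0:ℝ) < 1/2) (by norm_num : (0:ℝ) < 1/2) (by norm_num)
    simp only [smul_eq_mul] at h
    rw [hgexp, Real.exp_log h₁, Real.exp_log h₂] at h
    linarith
  have S3 : u₁ ≠ u₂ →
      Real.sqrt (besselK ν u₁ * besselK ν u₂) < besselK ν (Real.sqrt (u₁ * u₂)) := by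
    intro hne
    have h := (strictConcaveOn_log_besselK_exp ν).2 (mem_univ (Real.log u₁))
      (mem_univ (Real.log u₂)) (hxne hne)
      (by norm_num : (0:ℝ) < 1/2) (by norm_num : (0:ℝ) < 1/2) (by norm_num)
    simp only [smul_eq_mul] at h
    rw [hgexp, Real.exp_log h₁, Real.exp_log h₂] at h
    have hlog : Real.log (Real.sqrt (besselK ν u₁ * besselK ν u₂))
        < Real.log (besselK ν (Real.sqrt (u₁ * u₂))) := by
      rw [Real.log_sqrt (mul_pos hK1 hK2).le, Real.log_mul hK1.ne' hK2.ne']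
      linarith
    calc Real.sqrt (besselK ν u₁ * besselK ν u₂)
        = Real.exp (Real.log (Real.sqrt (besselK ν u₁ * besselK ν u₂))) :=
          (Real.exp_log (Real.sqrt_pos.2 (mul_pos hK1 hK2))).symm
      _ < Real.exp (Real.log (besselK ν (Real.sqrt (u₁ * u₂)))) := Real.exp_lt_exp.2 hlog
      _ = besselK ν (Real.sqrt (u₁ * u₂)) := Real.exp_log hKg
  have S1 : 1 ≤ |ν| → u₁ ≠ u₂ →
      2 * besselK ν u₁ * besselK ν u₂ / (besselK ν u₁ + besselK ν u₂)
        < besselK ν ((u₁ + u₂) / 2) := by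
    intro hν hne
    have hν2 : 1 ≤ ν ^ 2 := by nlinarith [sq_abs ν, abs_nonneg ν]
    have h := (strictConvexOn_inv_besselK hν2).2 (mem_Ioi.2 h₁) (mem_Ioi.2 h₂) hne
      (by norm_num : (0:ℝ) < 1/2) (by norm_num : (0:ℝ) < 1/2) (by norm_num)
    simp only [smul_eq_mul] at h
    rw [show (1/2) * u₁ + (1/2) * u₂ = (u₁ + u₂) / 2 by ring] at h
    have h2 : (besselK ν ((u₁ + u₂) / 2))⁻¹
        < (besselK ν u₁ + besselK ν u₂) / (2 * besselK ν u₁ * besselK ν u₂) := by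
      have heq : (1/2) * (besselK ν u₁)⁻¹ + (1/2) * (besselK ν u₂)⁻¹
          = (besselK ν u₁ + besselK ν u₂) / (2 * besselK ν u₁ * besselK ν u₂) := by
        field_simp
        ring
      linarith [h, heq]
    have h5 : 1 < besselK ν ((u₁ + u₂) / 2)
        * ((besselK ν u₁ + besselK ν u₂) / (2 * besselK ν u₁ * besselK ν u₂)) := by
      calc (1:ℝ) = besselK ν ((u₁ + u₂) / 2) * (besselK ν ((u₁ + u₂) / 2))⁻¹ :=
            (mul_inv_cancel₀ hKm.ne').symm
        _ < _ := mul_lt_mul_of_pos_left h2 hKm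
    rw [div_lt_iff₀ (by positivity)]
    rw [mul_div_assoc'] at h5
    have := (one_lt_div (by positivity : (0:ℝ) < 2 * besselK ν u₁ * besselK ν u₂)).1 h5
    linarith
  refine ⟨fun hν => ⟨?_, ?_, ?_⟩, ⟨?_, ?_, ?_⟩, ⟨?_, ?_, ?_⟩, ⟨?_, ?_, ?_⟩⟩
  -- part 1
  · rcases eq_or_ne u₁ u₂ with hEq | hne
    · subst hEq
      apply le_of_eq
      rw [show (u₁ + u₁) / 2 = u₁ by ring]
      field_simp
      ring
    · exact (S1 hν hne).le
  · intro heq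
    by_contra hne
    exact absurd heq (ne_of_lt (S1 hν hne))
  · intro hEq
    subst hEq
    rw [show (u₁ + u₁) / 2 = u₁ by ring]
    field_simp
    ring
  -- part 2
  · rcases eq_or_ne u₁ u₂ with hEq | hne
    · subst hEq
      apply le_of_eq
      rw [show (u₁ + u₁) / 2 = u₁ by ring, Real.sqrt_mul_self hK1.le]
    · exact (S2 hne).le
  · intro heq
    by_contra hne
    exact absurd heq (ne_of_lt (S2 hne))
  · intro hEq
    subst hEq
    rw [show (u₁ + u₁) / 2 = u₁ by ring, Real.sqrt_mul_self hK1.le]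
  -- part 3
  · rcases eq_or_ne u₁ u₂ with hEq | hne
    · subst hEq
      apply le_of_eq
      rw [Real.sqrt_mul_self hK1.le, Real.sqrt_mul_self h₁.le]
    · exact (S3 hne).le
  · intro heq
    by_contra hne
    exact absurd heq (ne_of_lt (S3 hne))
  · intro hEq
    subst hEq
    rw [Real.sqrt_mul_self hK1.le, Real.sqrt_mul_self h₁.le]
  -- part 4
  · rcases eq_or_ne u₁ u₂ with hEq | hne
    · subst hEq
      apply le_of_eq
      rw [Real.sqrt_mul_self h₁.le]
      ring
    · exact (S4 hne).le
  · intro heq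
    by_contra hne
    exact absurd heq (ne_of_lt (S4 hne))
  · intro hEq
    subst hEq
    rw [Real.sqrt_mul_self h₁.le]
    ring
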